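/- arXiv:math-ph/0611019 — 3 statements merged into one kernel-verified Lean document; each statement's English description precedes it below -/
import Mathlib

section
/- Gauge transformation of the discrete curvature: let A be a discrete 1-form on ℤ⁴, let h be a discrete 0-form with h_k ∈ SU(2) for all k, let h⁻¹ be the 0-form with components (h_k)⁻¹, and let A' = h∪d^ch⁻¹ + h∪A∪h⁻¹. Then the curvatures F = d^cA + A∪A and F' = d^cA' + A'∪A' satisfy F' = h∪F∪h⁻¹. -/
open Matrix

noncomputable section

namespace DiscreteYM

/-- Points of the combinatorial model of ℝ⁴ (vertices of ℤ⁴). -/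
abbrev Pt : Type := Fin 4 → ℤ

/-- 2×2 complex matrices, the coefficient algebra gl(2,ℂ). -/
abbrev Mat : Type := Matrix (Fin 2) (Fin 2) ℂ

/-- A discrete form on ℤ⁴: to each point `k` and each subset `S ⊆ {1,2,3,4}` a matrix.
A discrete `p`-form is such a function regarded through its values at `p`-element subsets. -/
abbrev DForm : Type := Pt → Finset (Fin 4) → Mat

/-- `shift S k` is `τ_S k`: the point `k` with each coordinate indexed by `S` increased by 1. -/
def shift (S : Finset (Fin 4)) (k : Pt) : Pt :=
  fun i => if i ∈ S then k i + 1 else k i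

/-- `ε(S) = (−1)^{|{(i,j) ∈ S×Sᶜ : j < i}|}`, the sign of the permutation of `(1,2,3,4)`
obtained by listing `S` in increasing order followed by `Sᶜ` in increasing order. -/
def sgn (S : Finset (Fin 4)) : ℤ :=
  (-1) ^ (((S ×ˢ Sᶜ).filter fun p => p.2 < p.1).card)

/-- The sign `(−1)^{|{(i,j) ∈ S₁×S₂ : j < i}|}` appearing in the cup product. -/
def sgnPair (S₁ S₂ : Finset (Fin 4)) : ℤ :=
  (-1) ^ (((S₁ ×ˢ S₂).filter fun p => p.2 < p.1).card)

/-- The combinatorial Hodge star `T`: `(Tφ)_k^{Sᶜ} = ε(S) φ_k^S`. -/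
def hodge (φ : DForm) : DForm :=
  fun k S => sgn Sᶜ • φ k Sᶜ

/-- The coboundary operator `d^c`:
`(d^cφ)_k^S = Σ_{i∈S} (−1)^{|{j∈S : j<i}|} (φ_{τ_i k}^{S∖{i}} − φ_k^{S∖{i}})`. -/
def dc (φ : DForm) : DForm :=
  fun k S => ∑ i ∈ S, ((-1 : ℤ) ^ ((S.filter fun j => j < i).card)) •
    (φ (shift {i} k) (S.erase i) - φ k (S.erase i))

/-- The cup product `φ∪ψ` of a `p`-form `φ` with a form `ψ`:
`(φ∪ψ)_k^S = Σ_{S₁⊔S₂=S, |S₁|=p} (−1)^{|{(i,j)∈S₁×S₂ : j<i}|} φ_k^{S₁} ψ_{τ_{S₁}k}^{S₂}`. -/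
def cup (p : ℕ) (φ ψ : DForm) : DForm :=
  fun k S => ∑ S₁ ∈ S.powerset.filter (fun T => T.card = p),
    sgnPair S₁ (S \ S₁) • (φ k S₁ * ψ (shift S₁ k) (S \ S₁))

/-- The discrete curvature 2-form `F = d^cA + A∪A` of a discrete 1-form `A`. -/
def curv (A : DForm) : DForm := dc A + cup 1 A A

/-- Cup product of a 0-form `g` with a form: `(g∪φ)_k^S = g_k φ_k^S`. -/
def lcup (g : Pt → Mat) (φ : DForm) : DForm := fun k S => g k * φ k S

/-- Cup product of a form with a 0-form `g`: `(φ∪g)_k^S = φ_k^S g_{τ_S k}`. -/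
def rcup (φ : DForm) (g : Pt → Mat) : DForm := fun k S => φ k S * g (shift S k)

/-- Coboundary of a 0-form `g`; in particular `(d^c g)_k^{i} = g_{τ_i k} − g_k`. -/
def dc0 (g : Pt → Mat) : DForm :=
  fun k S => ∑ i ∈ S, ((-1 : ℤ) ^ ((S.filter fun j => j < i).card)) •
    (g (shift {i} k) - g k)



lemma shift_shift {a b : Fin 4} (hab : a ≠ b) (k : Pt) :
    shift {a} (shift {b} k) = shift ({a, b} : Finset (Fin 4)) k := by
  funext i
  by_cases h1 : i = a <;> by_cases h2 : i = b <;>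
    simp [shift, h1, h2, hab, hab.symm]

lemma erase_pair_left {a b : Fin 4} (hab : a ≠ b) :
    ({a, b} : Finset (Fin 4)).erase a = {b} := by
  rw [show ({a, b} : Finset (Fin 4)) = insert a {b} from rfl,
    Finset.erase_insert (by simp [hab])]

lemma erase_pair_right {a b : Fin 4} (hab : a ≠ b) :
    ({a, b} : Finset (Fin 4)).erase b = {a} := by
  rw [show ({a, b} : Finset (Fin 4)) = insert a {b} from rfl,
    Finset.erase_insert_of_ne hab, Finset.erase_singleton]
  rfl

lemma filter_pair_lt_left {a b : Fin 4} (hab : a < b) :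
    (({a, b} : Finset (Fin 4)).filter fun j => j < a) = ∅ := by
  simp [Finset.filter_insert, Finset.filter_singleton, lt_irrefl, hab.asymm]

lemma filter_pair_lt_right {a b : Fin 4} (hab : a < b) :
    (({a, b} : Finset (Fin 4)).filter fun j => j < b) = {a} := by
  simp [Finset.filter_insert, Finset.filter_singleton, lt_irrefl, hab]

lemma dc_pair (φ : DForm) {a b : Fin 4} (hab : a < b) (k : Pt) :
    dc φ k {a, b} = (φ (shift {a} k) {b} - φ k {b}) - (φ (shift {b} k) {a} - φ k {a}) := by
  have hne : a ≠ b := hab.ne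
  rw [dc, Finset.sum_pair hne, erase_pair_left hne, erase_pair_right hne,
    filter_pair_lt_left hab, filter_pair_lt_right hab]
  simp [sub_eq_add_neg]
  abel

lemma powerset_pair_one {a b : Fin 4} (hab : a ≠ b) :
    (({a, b} : Finset (Fin 4)).powerset.filter fun T => T.card = 1) = {{a}, {b}} := by
  ext T
  simp only [Finset.mem_filter, Finset.mem_powerset, Finset.mem_insert,
    Finset.mem_singleton, Finset.card_eq_one]
  constructor
  · rintro ⟨hsub, x, rfl⟩
    have := hsub (Finset.mem_singleton_self x)
    simp only [Finset.mem_insert, Finset.mem_singleton] at this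
    rcases this with rfl | rfl
    · exact Or.inl rfl
    · exact Or.inr rfl
  · rintro (rfl | rfl)
    · exact ⟨by simp, a, rfl⟩
    · exact ⟨by simp, b, rfl⟩

lemma sdiff_pair_left {a b : Fin 4} (hab : a ≠ b) :
    ({a, b} : Finset (Fin 4)) \ {a} = {b} := by
  rw [Finset.sdiff_singleton_eq_erase, erase_pair_left hab]

lemma sdiff_pair_right {a b : Fin 4} (hab : a ≠ b) :
    ({a, b} : Finset (Fin 4)) \ {b} = {a} := by
  rw [Finset.sdiff_singleton_eq_erase, erase_pair_right hab]

lemma sgnPair_lt {a b : Fin 4} (hab : a < b) : sgnPair {a} {b} = 1 := by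
  rw [sgnPair, Finset.singleton_product_singleton]
  simp [Finset.filter_singleton, hab.asymm]

lemma sgnPair_gt {a b : Fin 4} (hab : a < b) : sgnPair {b} {a} = -1 := by
  rw [sgnPair, Finset.singleton_product_singleton]
  simp [Finset.filter_singleton, hab]

lemma cup_pair (φ ψ : DForm) {a b : Fin 4} (hab : a < b) (k : Pt) :
    cup 1 φ ψ k {a, b} =
      φ k {a} * ψ (shift {a} k) {b} - φ k {b} * ψ (shift {b} k) {a} := by
  have hne : a ≠ b := hab.ne
  have hne' : ({a} : Finset (Fin 4)) ≠ {b} := by simp [hne]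
  rw [cup, powerset_pair_one hne, Finset.sum_pair hne',
    sdiff_pair_left hne, sdiff_pair_right hne, sgnPair_lt hab, sgnPair_gt hab]
  simp [sub_eq_add_neg]

lemma dc0_singleton (g : Pt → Mat) (i : Fin 4) (k : Pt) :
    dc0 g k {i} = g (shift {i} k) - g k := by
  simp [dc0, Finset.filter_singleton, lt_irrefl]

lemma curv_gauge_aux (A : DForm) (h : Pt → Mat)
    (hSU : ∀ k, h k ∈ Matrix.unitaryGroup (Fin 2) ℂ ∧ (h k).det = 1)
    (A' : DForm)
    (hA' : A' = lcup h (dc0 (fun k => (h k)⁻¹)) + rcup (lcup h A) (fun k => (h k)⁻¹))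
    (k : Pt) {a b : Fin 4} (hab : a < b) :
    curv A' k {a, b} = rcup (lcup h (curv A)) (fun k => (h k)⁻¹) k {a, b} := by
  have hne : a ≠ b := hab.ne
  have hdet : ∀ x, IsUnit (h x).det := fun x => by rw [(hSU x).2]; exact isUnit_one
  have hg1 : ∀ x : Pt, h x * (h x)⁻¹ = 1 := fun x => Matrix.mul_nonsing_inv _ (hdet x)
  have hg2 : ∀ x : Pt, (h x)⁻¹ * h x = 1 := fun x => Matrix.nonsing_inv_mul _ (hdet x)
  have hA'i : ∀ (x : Pt) (i : Fin 4),
      (1 : Mat) + A' x {i} = h x * (1 + A x {i}) * (h (shift {i} x))⁻¹ := by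
    intro x i
    rw [hA']
    show (1 : Mat) + (lcup h (dc0 fun k => (h k)⁻¹) x {i}
      + rcup (lcup h A) (fun k => (h k)⁻¹) x {i}) = _
    simp only [lcup, rcup, dc0_singleton]
    rw [mul_sub]
    rw [hg1 x]
    noncomm_ring
  have key : ∀ (x y z : Pt) (P Q : Mat),
      (h x * P * (h y)⁻¹) * (h y * Q * (h z)⁻¹) = h x * (P * Q) * (h z)⁻¹ := by
    intro x y z P Q
    simp only [mul_assoc]
    rw [← mul_assoc ((h y)⁻¹) (h y), hg2 y, one_mul]
  have step1 : curv A' k {a, b}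
      = (1 + A' k {a}) * (1 + A' (shift {a} k) {b})
        - (1 + A' k {b}) * (1 + A' (shift {b} k) {a}) := by
    show dc A' k {a, b} + cup 1 A' A' k {a, b} = _
    rw [dc_pair A' hab, cup_pair A' A' hab]
    noncomm_ring
  have step2 : curv A k {a, b}
      = (1 + A k {a}) * (1 + A (shift {a} k) {b})
        - (1 + A k {b}) * (1 + A (shift {b} k) {a}) := by
    show dc A k {a, b} + cup 1 A A k {a, b} = _
    rw [dc_pair A hab, cup_pair A A hab]
    noncomm_ring
  rw [step1, hA'i k a, hA'i (shift {a} k) b, hA'i k b, hA'i (shift {b} k) a,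
    key, key, shift_shift hne.symm k, shift_shift hne k,
    show ({b, a} : Finset (Fin 4)) = {a, b} from Finset.pair_comm b a]
  show _ = (h k * curv A k {a, b}) * (h (shift {a, b} k))⁻¹
  rw [step2]
  noncomm_ring

/-- gauge transformation of the discrete curvature: if `h_k ∈ SU(2)` and
`A' = h∪d^ch⁻¹ + h∪A∪h⁻¹`, then `F' = h∪F∪h⁻¹` (an identity of 2-forms). -/
theorem curv_gauge (A : DForm) (h : Pt → Mat)
    (hSU : ∀ k, h k ∈ Matrix.unitaryGroup (Fin 2) ℂ ∧ (h k).det = 1)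
    (A' : DForm)
    (hA' : A' = lcup h (dc0 (fun k => (h k)⁻¹)) + rcup (lcup h A) (fun k => (h k)⁻¹))
    (k : Pt) (S : Finset (Fin 4)) (hS : S.card = 2) :
    curv A' k S = rcup (lcup h (curv A)) (fun k => (h k)⁻¹) k S := by
  obtain ⟨a, b, hne, rfl⟩ := Finset.card_eq_two.mp hS
  rcases hne.lt_or_gt with hab | hab
  · exact curv_gauge_aux A h hSU A' hA' k hab
  · rw [Finset.pair_comm a b]
    exact curv_gauge_aux A h hSU A' hA' k hab

end DiscreteYM

end
end

section
/- Let h be a discrete 0-form on ℤ⁴. Then T(f∪h) = Tf∪h holds for every discrete 2-form f if and only if h satisfies the conditions h_{τ₁τ₂ k} = h_{τ₃τ₄ k}, h_{τ₁τ₃ k} = h_{τ₂τ₄ k}, and h_{τ₁τ₄ k} = h_{τ₂τ₃ k} for all k ∈ ℤ⁴. -/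
open Matrix

noncomputable section

namespace DiscreteYM

/-- `T(f∪h) = Tf∪h` holds for every discrete 2-form `f` if and only if
the 0-form `h` satisfies conditions (4.17):
`h_{τ₁τ₂k} = h_{τ₃τ₄k}`, `h_{τ₁τ₃k} = h_{τ₂τ₄k}`, `h_{τ₁τ₄k} = h_{τ₂τ₃k}` for all `k`. -/
theorem hodge_rcup_iff (h : Pt → Mat) :
    (∀ (f : DForm) (k : Pt) (S : Finset (Fin 4)), S.card = 2 →
        hodge (rcup f h) k S = rcup (hodge f) h k S)
      ↔ (∀ k : Pt,
          h (shift {0, 1} k) = h (shift {2, 3} k)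
          ∧ h (shift {0, 2} k) = h (shift {1, 3} k)
          ∧ h (shift {0, 3} k) = h (shift {1, 2} k)) := by
  constructor
  · intro H k
    have key : ∀ S : Finset (Fin 4), S.card = 2 → h (shift Sᶜ k) = h (shift S k) := by
      intro S hS
      have hx := H (fun _ _ => 1) k S hS
      simp only [hodge, rcup, one_mul] at hx
      rcases neg_one_pow_eq_or ℤ (((Sᶜ ×ˢ Sᶜᶜ).filter fun p => p.2 < p.1).card) with h1 | h1 <;>
        simp only [sgn, h1, one_smul, neg_smul, neg_mul, neg_inj, neg_smul] at hx <;>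
        simpa using hx
    refine ⟨?_, ?_, ?_⟩
    · have := key {0, 1} (by decide)
      rwa [show ({0, 1} : Finset (Fin 4))ᶜ = {2, 3} from by decide, eq_comm] at this
    · have := key {0, 2} (by decide)
      rwa [show ({0, 2} : Finset (Fin 4))ᶜ = {1, 3} from by decide, eq_comm] at this
    · have := key {0, 3} (by decide)
      rwa [show ({0, 3} : Finset (Fin 4))ᶜ = {1, 2} from by decide, eq_comm] at this
  · intro H f k S hS
    obtain ⟨h12, h13, h14⟩ := H k
    have key : h (shift Sᶜ k) = h (shift S k) := by
      have hcases : S = {0,1} ∨ S = {0,2} ∨ S = {0,3} ∨ S = {1,2} ∨ S = {1,3} ∨ S = {2,3} := by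
        revert hS; revert S; decide
      rcases hcases with rfl | rfl | rfl | rfl | rfl | rfl
      · rw [show ({0,1} : Finset (Fin 4))ᶜ = {2,3} from by decide]; exact h12.symm
      · rw [show ({0,2} : Finset (Fin 4))ᶜ = {1,3} from by decide]; exact h13.symm
      · rw [show ({0,3} : Finset (Fin 4))ᶜ = {1,2} from by decide]; exact h14.symm
      · rw [show ({1,2} : Finset (Fin 4))ᶜ = {0,3} from by decide]; exact h14
      · rw [show ({1,3} : Finset (Fin 4))ᶜ = {0,2} from by decide]; exact h13
      · rw [show ({2,3} : Finset (Fin 4))ᶜ = {0,1} from by decide]; exact h12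
    show sgn Sᶜ • (f k Sᶜ * h (shift Sᶜ k)) = (sgn Sᶜ • f k Sᶜ) * h (shift S k)
    rw [key, smul_mul_assoc]

end DiscreteYM

end
end

section
/- Gauge invariance of the discrete Yang–Mills equations: let A be a discrete 1-form on ℤ⁴ with all components A_k^i ∈ su(2), let F = d^cA + A∪A, let h be a discrete 0-form with h_k ∈ SU(2) for all k satisfying h_{τ₁τ₂ k} = h_{τ₃τ₄ k}, h_{τ₁τ₃ k} = h_{τ₂τ₄ k}, h_{τ₁τ₄ k} = h_{τ₂τ₃ k} for all k, and let A' = h∪d^ch⁻¹ + h∪A∪h⁻¹ with curvature F' = d^cA' + A'∪A'. If d^c(TF) + A∪TF − TF∪A = 0, then d^c(TF') + A'∪TF' − TF'∪A' = 0. -/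
open Matrix

noncomputable section

namespace DiscreteYM

/-- Conditions (4.17) on a 0-form `h`:
`h_{τ₁τ₂k} = h_{τ₃τ₄k}`, `h_{τ₁τ₃k} = h_{τ₂τ₄k}`, `h_{τ₁τ₄k} = h_{τ₂τ₃k}` for all `k`. -/
def Cond417 (h : Pt → Mat) : Prop :=
  ∀ k : Pt,
    h (shift {0, 1} k) = h (shift {2, 3} k)
    ∧ h (shift {0, 2} k) = h (shift {1, 3} k)
    ∧ h (shift {0, 3} k) = h (shift {1, 2} k)

/-- Membership in `su(2)`: traceless skew-Hermitian 2×2 complex matrices. -/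
def MemSU2alg (m : Mat) : Prop := m.trace = 0 ∧ mᴴ = -m

/-! The transport matrices `U_k^i = 1 + A_k^i` transform as `U_k^i ↦ h_k U_k^i h_{τ_i k}⁻¹`.
On a square with `a < b`, `F_k^{ab} = U_k^a U_{τ_a k}^b − U_k^b U_{τ_b k}^a` is a difference of
two transports around the square, so `F` transforms as `F_k^S ↦ h_k F_k^S h_{τ_S k}⁻¹`. The
conditions (4.17) say exactly that `h_{τ_S k} = h_{τ_{Sᶜ} k}` for `|S| = 2`, so `TF` transforms
in the same way, and then on a 3-cell `d^c_A(TF)` is a signed sum of terms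
`U_k^i (TF)_{τ_i k} − (TF)_k U_{τ_{S∖i} k}^i` which are again conjugated by `h_k, h_{τ_S k}⁻¹`. -/

lemma shift_shift_s10 {S T : Finset (Fin 4)} (hST : Disjoint S T) (k : Pt) :
    shift S (shift T k) = shift (S ∪ T) k := by
  funext j
  by_cases hjS : j ∈ S
  · simp [shift, hjS, Finset.disjoint_left.mp hST hjS]
  · by_cases hjT : j ∈ T <;> simp [shift, hjS, hjT]

lemma shift_erase_shift_singleton {S : Finset (Fin 4)} {i : Fin 4} (hi : i ∈ S) (k : Pt) :
    shift (S.erase i) (shift {i} k) = shift S k := by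
  rw [shift_shift_s10 (by simp), Finset.erase_union_eq i S hi]

lemma shift_singleton_shift_erase {S : Finset (Fin 4)} {i : Fin 4} (hi : i ∈ S) (k : Pt) :
    shift {i} (shift (S.erase i) k) = shift S k := by
  rw [shift_shift_s10 (by simp), ← Finset.insert_eq, Finset.insert_erase hi]

lemma shift_singleton_shift_singleton {a b : Fin 4} (hab : a ≠ b) (k : Pt) :
    shift {b} (shift {a} k) = shift {b, a} k := by
  rw [shift_shift_s10 (by simpa using hab.symm), ← Finset.insert_eq]

lemma sgnPair_singleton_sdiff : ∀ S : Finset (Fin 4), ∀ i ∈ S,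
    sgnPair {i} (S \ {i}) = (-1) ^ (S.filter fun j => j < i).card := by decide

-- For `|S| = 3`, `#{j ∈ S | i < j} = 2 - #{j ∈ S | j < i}` has the same parity.
lemma sgnPair_erase_singleton : ∀ S : Finset (Fin 4), S.card = 3 → ∀ i ∈ S,
    sgnPair (S.erase i) {i} = (-1) ^ (S.filter fun j => j < i).card := by decide

lemma powerset_filter_card_two : ∀ S : Finset (Fin 4), S.card = 3 →
    S.powerset.filter (fun T => T.card = 2) = S.image S.erase := by decide

lemma card_filter_lt_pair : ∀ a b : Fin 4, a < b →
    (({a, b} : Finset (Fin 4)).filter fun j => j < a).card = 0 ∧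
    (({a, b} : Finset (Fin 4)).filter fun j => j < b).card = 1 := by decide

lemma compl_of_card_eq_two : ∀ S : Finset (Fin 4), S.card = 2 →
    (S = {0, 1} ∧ Sᶜ = {2, 3}) ∨ (S = {2, 3} ∧ Sᶜ = {0, 1}) ∨
    (S = {0, 2} ∧ Sᶜ = {1, 3}) ∨ (S = {1, 3} ∧ Sᶜ = {0, 2}) ∨
    (S = {0, 3} ∧ Sᶜ = {1, 2}) ∨ (S = {1, 2} ∧ Sᶜ = {0, 3}) := by decide

lemma mul_mul_eq_of_mul_eq_one {R : Type*} [Ring R] {u q : R} (p x y s : R) (huq : u * q = 1) :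
    (p * x * u) * (q * y * s) = p * (x * y) * s := by
  calc (p * x * u) * (q * y * s) = p * x * (u * q) * y * s := by noncomm_ring
    _ = p * (x * y) * s := by rw [huq, mul_one]; noncomm_ring

def gauge (h : Pt → Mat) (A : DForm) : DForm :=
  lcup h (dc0 fun k => (h k)⁻¹) + rcup (lcup h A) fun k => (h k)⁻¹

def covDc (A X : DForm) : DForm := dc X + cup 1 A X - cup 2 X A

def IsConjOn (h : Pt → Mat) (p : ℕ) (X X' : DForm) : Prop :=
  ∀ k S, S.card = p → X' k S = h k * X k S * (h (shift S k))⁻¹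

lemma IsConjOn.one_add_apply_singleton {h : Pt → Mat} {A A' : DForm}
    (hA : IsConjOn h 1 (1 + A) (1 + A')) (k : Pt) (i : Fin 4) :
    1 + A' k {i} = h k * (1 + A k {i}) * (h (shift {i} k))⁻¹ :=
  hA k {i} (Finset.card_singleton i)

section Apply

variable (φ ψ : DForm) (k : Pt)

lemma cup_one_apply (S : Finset (Fin 4)) :
    cup 1 φ ψ k S = ∑ i ∈ S, (-1 : ℤ) ^ (S.filter fun j => j < i).card •
      (φ k {i} * ψ (shift {i} k) (S.erase i)) := by
  rw [cup, ← Finset.powersetCard_eq_filter, Finset.powersetCard_one, Finset.sum_map]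
  refine Finset.sum_congr rfl fun i hi => ?_
  rw [Function.Embedding.coeFn_mk, sgnPair_singleton_sdiff S i hi,
    Finset.sdiff_singleton_eq_erase]

lemma cup_two_apply_of_card_eq_three {S : Finset (Fin 4)} (hS : S.card = 3) :
    cup 2 φ ψ k S = ∑ i ∈ S, (-1 : ℤ) ^ (S.filter fun j => j < i).card •
      (φ k (S.erase i) * ψ (shift (S.erase i) k) {i}) := by
  rw [cup, powerset_filter_card_two S hS, Finset.sum_image (Finset.erase_injOn S)]
  refine Finset.sum_congr rfl fun i hi => ?_
  rw [Finset.sdiff_erase_self hi, sgnPair_erase_singleton S hS i hi]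

lemma curv_apply (S : Finset (Fin 4)) :
    curv φ k S = ∑ i ∈ S, (-1 : ℤ) ^ (S.filter fun j => j < i).card •
      (φ (shift {i} k) (S.erase i) - φ k (S.erase i) + φ k {i} * φ (shift {i} k) (S.erase i)) := by
  simp only [curv, Pi.add_apply, dc, cup_one_apply, ← Finset.sum_add_distrib, smul_add]

lemma curv_pair {a b : Fin 4} (hab : a < b) :
    curv φ k {a, b} = (1 + φ k {a}) * (1 + φ (shift {a} k) {b})
      - (1 + φ k {b}) * (1 + φ (shift {b} k) {a}) := by
  obtain ⟨hsa, hsb⟩ := card_filter_lt_pair a b hab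
  rw [curv_apply, Finset.sum_pair hab.ne, hsa, hsb, Finset.erase_insert (by simp [hab.ne]),
    Finset.erase_insert_of_ne hab.ne, Finset.erase_singleton, insert_empty_eq]
  simp only [pow_zero, pow_one, one_smul, neg_one_smul]
  noncomm_ring

lemma covDc_apply_of_card_eq_three {S : Finset (Fin 4)} (hS : S.card = 3) :
    covDc φ ψ k S = ∑ i ∈ S, (-1 : ℤ) ^ (S.filter fun j => j < i).card •
      ((1 + φ k {i}) * ψ (shift {i} k) (S.erase i)
        - ψ k (S.erase i) * (1 + φ (shift (S.erase i) k) {i})) := by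
  simp only [covDc, Pi.sub_apply, Pi.add_apply, dc, cup_one_apply,
    cup_two_apply_of_card_eq_three _ _ _ hS, ← Finset.sum_add_distrib, ← Finset.sum_sub_distrib,
    ← smul_add, ← smul_sub]
  refine Finset.sum_congr rfl fun i _ => ?_
  noncomm_ring

end Apply

section Gauge

variable {h : Pt → Mat} (hh : ∀ k, IsUnit (h k).det)
include hh

lemma isConjOn_one_add_gauge (A : DForm) : IsConjOn h 1 (1 + A) (1 + gauge h A) := by
  intro k S hS
  obtain ⟨i, rfl⟩ := Finset.card_eq_one.mp hS
  simp only [gauge, lcup, rcup, dc0, Pi.add_apply, Pi.one_apply, Finset.sum_singleton,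
    Finset.filter_singleton, lt_irrefl, if_false, Finset.card_empty, pow_zero, one_smul]
  calc 1 + (h k * ((h (shift {i} k))⁻¹ - (h k)⁻¹) + h k * A k {i} * (h (shift {i} k))⁻¹)
      = h k * (1 + A k {i}) * (h (shift {i} k))⁻¹ + (1 - h k * (h k)⁻¹) := by noncomm_ring
    _ = h k * (1 + A k {i}) * (h (shift {i} k))⁻¹ := by
      rw [Matrix.mul_nonsing_inv _ (hh k), sub_self, add_zero]

lemma isConjOn_curv {A A' : DForm} (hA : IsConjOn h 1 (1 + A) (1 + A')) :
    IsConjOn h 2 (curv A) (curv A') := by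
  have hsq : ∀ k {a b : Fin 4}, a < b →
      curv A' k {a, b} = h k * curv A k {a, b} * (h (shift {a, b} k))⁻¹ := by
    intro k a b hab
    rw [curv_pair _ _ hab, curv_pair _ _ hab, hA.one_add_apply_singleton,
      hA.one_add_apply_singleton, hA.one_add_apply_singleton, hA.one_add_apply_singleton,
      mul_mul_eq_of_mul_eq_one _ _ _ _ (Matrix.nonsing_inv_mul _ (hh _)),
      mul_mul_eq_of_mul_eq_one _ _ _ _ (Matrix.nonsing_inv_mul _ (hh _)),
      shift_singleton_shift_singleton hab.ne, shift_singleton_shift_singleton hab.ne',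
      Finset.pair_comm b a, ← sub_mul, ← mul_sub]
  intro k S hS
  obtain ⟨a, b, hab, rfl⟩ := Finset.card_eq_two.mp hS
  rcases hab.lt_or_gt with hab | hab
  · exact hsq k hab
  · rw [Finset.pair_comm a b]
    exact hsq k hab

lemma isConjOn_covDc {A A' X X' : DForm} (hA : IsConjOn h 1 (1 + A) (1 + A'))
    (hX : IsConjOn h 2 X X') : IsConjOn h 3 (covDc A X) (covDc A' X') := by
  intro k S hS
  rw [covDc_apply_of_card_eq_three _ _ _ hS, covDc_apply_of_card_eq_three _ _ _ hS,
    Finset.mul_sum, Finset.sum_mul]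
  refine Finset.sum_congr rfl fun i hi => ?_
  have hSi : (S.erase i).card = 2 := by rw [Finset.card_erase_of_mem hi, hS]
  rw [mul_smul_comm, smul_mul_assoc, hA.one_add_apply_singleton, hA.one_add_apply_singleton,
    hX _ _ hSi, hX _ _ hSi,
    mul_mul_eq_of_mul_eq_one _ _ _ _ (Matrix.nonsing_inv_mul _ (hh _)),
    mul_mul_eq_of_mul_eq_one _ _ _ _ (Matrix.nonsing_inv_mul _ (hh _)),
    shift_erase_shift_singleton hi, shift_singleton_shift_erase hi, ← sub_mul, ← mul_sub]

end Gauge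

lemma Cond417.shift_compl {h : Pt → Mat} (h417 : Cond417 h) (k : Pt) {S : Finset (Fin 4)}
    (hS : S.card = 2) : h (shift Sᶜ k) = h (shift S k) := by
  obtain ⟨h01, h02, h03⟩ := h417 k
  rcases compl_of_card_eq_two S hS with ⟨rfl, hc⟩ | ⟨rfl, hc⟩ | ⟨rfl, hc⟩ | ⟨rfl, hc⟩ |
    ⟨rfl, hc⟩ | ⟨rfl, hc⟩ <;> simp only [hc, h01, h02, h03]

lemma isConjOn_hodge {h : Pt → Mat} (h417 : Cond417 h) {X X' : DForm}
    (hX : IsConjOn h 2 X X') : IsConjOn h 2 (hodge X) (hodge X') := by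
  intro k S hS
  have hSc : Sᶜ.card = 2 := by rw [Finset.card_compl, hS, Fintype.card_fin]
  rw [hodge, hodge, hX k Sᶜ hSc, h417.shift_compl k hS, mul_smul_comm, smul_mul_assoc]

theorem ym_gauge_invariant_general (A : DForm)
    (h : Pt → Mat)
    (hSU : ∀ k, h k ∈ Matrix.unitaryGroup (Fin 2) ℂ ∧ (h k).det = 1)
    (h417 : Cond417 h)
    (A' : DForm)
    (hA' : A' = lcup h (dc0 (fun k => (h k)⁻¹)) + rcup (lcup h A) (fun k => (h k)⁻¹))
    (hYM : ∀ (k : Pt) (S : Finset (Fin 4)), S.card = 3 →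
      dc (hodge (curv A)) k S + cup 1 A (hodge (curv A)) k S
        - cup 2 (hodge (curv A)) A k S = 0) :
    ∀ (k : Pt) (S : Finset (Fin 4)), S.card = 3 →
      dc (hodge (curv A')) k S + cup 1 A' (hodge (curv A')) k S
        - cup 2 (hodge (curv A')) A' k S = 0 := by
  have hh : ∀ k, IsUnit (h k).det := fun k => by simp [(hSU k).2]
  have hU : IsConjOn h 1 (1 + A) (1 + A') := hA' ▸ isConjOn_one_add_gauge hh A
  have hTF := isConjOn_covDc hh hU (isConjOn_hodge h417 (isConjOn_curv hh hU))
  intro k S hS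
  change covDc A' (hodge (curv A')) k S = 0
  rw [hTF k S hS, show covDc A (hodge (curv A)) k S = 0 from hYM k S hS, mul_zero, zero_mul]

/-- gauge invariance of the discrete Yang–Mills equations: for an
`su(2)`-valued 1-form `A` with curvature `F`, an `SU(2)`-valued 0-form `h`
satisfying (4.17), and `A' = h∪d^ch⁻¹ + h∪A∪h⁻¹` with curvature `F'`, if
`d^c(TF) + A∪TF − TF∪A = 0` then `d^c(TF') + A'∪TF' − TF'∪A' = 0`. -/
theorem ym_gauge_invariant (A : DForm) (hA : ∀ (k : Pt) (i : Fin 4), MemSU2alg (A k {i}))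
    (h : Pt → Mat)
    (hSU : ∀ k, h k ∈ Matrix.unitaryGroup (Fin 2) ℂ ∧ (h k).det = 1)
    (h417 : Cond417 h)
    (A' : DForm)
    (hA' : A' = lcup h (dc0 (fun k => (h k)⁻¹)) + rcup (lcup h A) (fun k => (h k)⁻¹))
    (hYM : ∀ (k : Pt) (S : Finset (Fin 4)), S.card = 3 →
      dc (hodge (curv A)) k S + cup 1 A (hodge (curv A)) k S
        - cup 2 (hodge (curv A)) A k S = 0) :
    ∀ (k : Pt) (S : Finset (Fin 4)), S.card = 3 →
      dc (hodge (curv A')) k S + cup 1 A' (hodge (curv A')) k S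
        - cup 2 (hodge (curv A')) A' k S = 0 :=
  ym_gauge_invariant_general A h hSU h417 A' hA' hYM

end DiscreteYM

end
end
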